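/- arXiv:2512.17637 — 6 statements merged into one kernel-verified Lean document; each statement's English description precedes it below -/
import Mathlib

section
/- Let M be a real number and c a real number with 0 ≤ c ≤ M. Then for all real numbers v ≥ 0 and d ≥ 0, writing d̄ = min(d, M) for the M-bounded delay, each of the five guard relations is preserved when the delay is bounded: (v + d + 1 < c ↔ v + d̄ + 1 < c), (v + d + 1 ≤ c ↔ v + d̄ + 1 ≤ c), (v + d + 1 = c ↔ v + d̄ + 1 = c), (v + d + 1 ≥ c ↔ v + d̄ + 1 ≥ c), and (v + d + 1 > c ↔ v + d̄ + 1 > c). -/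
/-- Bounding a delay `d ≥ 0` to `d̄ = min(d, M)` preserves all five guard relations
of the clock value `v + d + 1` against a constant `c` with `0 ≤ c ≤ M`. -/
theorem bounded_delay_preserves_guards (M c : ℝ) (hc0 : 0 ≤ c) (hcM : c ≤ M)
    (v d : ℝ) (hv : 0 ≤ v) (hd : 0 ≤ d) :
    (v + d + 1 < c ↔ v + min d M + 1 < c) ∧
    (v + d + 1 ≤ c ↔ v + min d M + 1 ≤ c) ∧
    (v + d + 1 = c ↔ v + min d M + 1 = c) ∧
    (v + d + 1 ≥ c ↔ v + min d M + 1 ≥ c) ∧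
    (v + d + 1 > c ↔ v + min d M + 1 > c) := by
  rcases le_total d M with h | h
  · simp [min_eq_left h]
  · rw [min_eq_right h]
    refine ⟨⟨fun h1 => by linarith, fun h1 => by linarith⟩,
      ⟨fun h1 => by linarith, fun h1 => by linarith⟩,
      ⟨fun h1 => by linarith, fun h1 => by linarith⟩,
      ⟨fun _ => by linarith, fun _ => by linarith⟩,
      ⟨fun _ => by linarith, fun _ => by linarith⟩⟩
end

section
/- (Lemma 1, clock-valuation form.) Let X be a finite set of clocks, M ≥ 0 a real number, n a natural number, d_0, …, d_n real delays with d_i ≥ 0, and ρ_0, …, ρ_n subsets of X (the clocks reset at each step). Define the exact valuations v_0, …, v_{n+1} : X → ℝ by v_0(x) = 0 and v_{i+1}(x) = 0 if x ∈ ρ_i, and v_{i+1}(x) = v_i(x) + d_i + 1 otherwise. Define the bounded-truncated valuations w_0, …, w_{n+1} : X → ℝ by w_0(x) = 0 and w_{i+1}(x) = 0 if x ∈ ρ_i, and w_{i+1}(x) = min(w_i(x) + min(d_i, M) + 1, M + 1) otherwise. Then for every index i ≤ n + 1 and every clock x ∈ X, either w_i(x) = v_i(x) with v_i(x) ≤ M,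 or both v_i(x) > M and w_i(x) > M. Consequently, for every i ≤ n, every clock x ∈ X, every constant c with 0 ≤ c ≤ M, and every relation ⋈ ∈ {<, ≤, =, ≥, >}, one has (v_i(x) + d_i + 1) ⋈ c if and only if (w_i(x) + min(d_i, M) + 1) ⋈ c. -/
/-- Lemma 1 (clock-valuation form): the exact valuations `v` and the
bounded-truncated valuations `w` of a trajectory agree below the maximum
constant `M` (or are both above `M`), and hence all guard checks agree. -/
theorem delay_bounded_run_same_guards
    (X : Type*) [Fintype X] (M : ℝ) (hM : 0 ≤ M) (n : ℕ)
    (d : ℕ → ℝ) (hd : ∀ i, 0 ≤ d i)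
    (ρ : ℕ → Set X)
    (v w : ℕ → X → ℝ)
    (hv0 : ∀ x, v 0 x = 0)
    (hvr : ∀ i, ∀ x ∈ ρ i, v (i + 1) x = 0)
    (hvn : ∀ i, ∀ x ∉ ρ i, v (i + 1) x = v i x + d i + 1)
    (hw0 : ∀ x, w 0 x = 0)
    (hwr : ∀ i, ∀ x ∈ ρ i, w (i + 1) x = 0)
    (hwn : ∀ i, ∀ x ∉ ρ i, w (i + 1) x = min (w i x + min (d i) M + 1) (M + 1)) :
    (∀ i ≤ n + 1, ∀ x : X, (w i x = v i x ∧ v i x ≤ M) ∨ (M < v i x ∧ M < w i x)) ∧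
    (∀ i ≤ n, ∀ x : X, ∀ c : ℝ, 0 ≤ c → c ≤ M →
      ((v i x + d i + 1 < c ↔ w i x + min (d i) M + 1 < c) ∧
       (v i x + d i + 1 ≤ c ↔ w i x + min (d i) M + 1 ≤ c) ∧
       (v i x + d i + 1 = c ↔ w i x + min (d i) M + 1 = c) ∧
       (v i x + d i + 1 ≥ c ↔ w i x + min (d i) M + 1 ≥ c) ∧
       (v i x + d i + 1 > c ↔ w i x + min (d i) M + 1 > c))) := by
  have key : ∀ i, ∀ x : X, 0 ≤ v i x ∧ 0 ≤ w i x ∧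
      ((w i x = v i x ∧ v i x ≤ M) ∨ (M < v i x ∧ M < w i x)) := by
    intro i
    induction i with
    | zero =>
      intro x
      refine ⟨by rw [hv0], by rw [hw0], Or.inl ⟨by rw [hv0, hw0], by rw [hv0]; exact hM⟩⟩
    | succ i ih =>
      intro x
      by_cases hx : x ∈ ρ i
      · refine ⟨by rw [hvr i x hx], by rw [hwr i x hx],
          Or.inl ⟨by rw [hvr i x hx, hwr i x hx], by rw [hvr i x hx]; exact hM⟩⟩
      · obtain ⟨hv, hw, hcase⟩ := ih x
        have hdi := hd i
        rw [hvn i x hx, hwn i x hx]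
        refine ⟨by linarith, le_min (by positivity) (by linarith), ?_⟩
        rcases hcase with ⟨heq, hle⟩ | ⟨h1, h2⟩
        · rcases le_total (d i) M with h | h
          · rw [min_eq_left h]
            rcases le_or_gt (v i x + d i + 1) M with h' | h'
            · exact Or.inl ⟨by rw [heq, min_eq_left (by linarith)], h'⟩
            · refine Or.inr ⟨h', lt_min (by linarith [heq ▸ h']) (by linarith)⟩
          · rw [min_eq_right h]
            refine Or.inr ⟨by linarith, lt_min (by linarith) (by linarith)⟩
        · have hm : (0:ℝ) ≤ min (d i) M := le_min hdi hM
          exact Or.inr ⟨by linarith, lt_min (by linarith) (by linarith)⟩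
  constructor
  · intro i _ x
    exact (key i x).2.2
  · intro i _ x c hc hcM
    obtain ⟨hv, hw, hcase⟩ := key i x
    have hdi := hd i
    have hm : (0:ℝ) ≤ min (d i) M := le_min hdi hM
    have main : (v i x + d i + 1 = w i x + min (d i) M + 1) ∨
        (c < v i x + d i + 1 ∧ c < w i x + min (d i) M + 1) := by
      rcases hcase with ⟨heq, hle⟩ | ⟨h1, h2⟩
      · rcases le_total (d i) M with h | h
        · exact Or.inl (by rw [heq, min_eq_left h])
        · exact Or.inr ⟨by linarith, by rw [min_eq_right h]; linarith⟩
      · exact Or.inr ⟨by linarith, by linarith⟩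
    rcases main with h | ⟨hA, hB⟩
    · rw [h]
      exact ⟨Iff.rfl, Iff.rfl, Iff.rfl, Iff.rfl, Iff.rfl⟩
    · exact ⟨by constructor <;> intro h' <;> linarith,
        by constructor <;> intro h' <;> linarith,
        by constructor <;> intro h' <;> linarith,
        by constructor <;> intro h' <;> linarith,
        by constructor <;> intro h' <;> linarith⟩
end

section
/- (Lemma 2, digital-time.) Let n be a natural number, let Δθ_0, …, Δθ_n and Δu_0, …, Δu_n be real numbers with Δu_k < 0 for all k, let d_0, …, d_n be natural-number delays, let M be a natural number, and set d̄_k = min(d_k, M). Define the suffix returns G_{n+1} = 0 and, for k = n down to 0, G_k = Δθ_k + ((1 − γ^{d_k})/(1 − γ))·Δu_k + γ^(d_k + 1)·G_{k+1}; define Ḡ_k analogously with d̄_k in place of d_k. If G_k > 0 for every k ∈ {0, …, n}, then Ḡ_k ≥ G_k for every k ∈ {0, …, n + 1}; in particular the delay-bounded total return satisfies Ḡ_0 ≥ G_0. -/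
/-- Lemma 2 (digital-time): if all state-based rewards are negative and all suffix
returns `G k` of the trajectory are positive, then the delay-bounded trajectory
(replacing each delay `d k` by `min (d k) M`) has suffix returns `Gb k ≥ G k`. -/
theorem delay_bounded_return_ge_digital (γ : ℝ) (hγ0 : 0 < γ) (hγ1 : γ < 1)
    (n : ℕ) (Δθ Δu : ℕ → ℝ) (hΔu : ∀ k ≤ n, Δu k < 0)
    (d : ℕ → ℕ) (M : ℕ)
    (G Gb : ℕ → ℝ)
    (hGend : G (n + 1) = 0) (hGbend : Gb (n + 1) = 0)
    (hG : ∀ k ≤ n, G k =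
      Δθ k + ((1 - γ ^ d k) / (1 - γ)) * Δu k + γ ^ (d k + 1) * G (k + 1))
    (hGb : ∀ k ≤ n, Gb k =
      Δθ k + ((1 - γ ^ min (d k) M) / (1 - γ)) * Δu k + γ ^ (min (d k) M + 1) * Gb (k + 1))
    (hpos : ∀ k ≤ n, 0 < G k) :
    ∀ k ≤ n + 1, Gb k ≥ G k := by
  have h1γ : (0:ℝ) < 1 - γ := by linarith
  have key : ∀ m k, k ≤ n + 1 → n + 1 - k ≤ m → Gb k ≥ G k := by
    intro m
    induction m with
    | zero =>
      intro k hk hm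
      have : k = n + 1 := by omega
      subst this
      rw [hGend, hGbend]
    | succ m ih =>
      intro k hk hm
      rcases eq_or_lt_of_le hk with heq | hlt
      · subst heq; rw [hGend, hGbend]
      · have hkn : k ≤ n := by omega
        have hIH : Gb (k + 1) ≥ G (k + 1) := ih (k + 1) (by omega) (by omega)
        have hGnext : 0 ≤ G (k + 1) := by
          rcases eq_or_lt_of_le (Nat.succ_le_of_lt hlt) with h | h
          · rw [← h] at hGend; rw [hGend]
          · exact le_of_lt (hpos (k + 1) (by omega))
        have hγle : γ ^ d k ≤ γ ^ min (d k) M :=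
          pow_le_pow_of_le_one (le_of_lt hγ0) (le_of_lt hγ1) (min_le_left _ _)
        have hγle1 : γ ^ (d k + 1) ≤ γ ^ (min (d k) M + 1) :=
          pow_le_pow_of_le_one (le_of_lt hγ0) (le_of_lt hγ1) (by omega)
        have hA : ((1 - γ ^ d k) / (1 - γ)) * Δu k ≤
            ((1 - γ ^ min (d k) M) / (1 - γ)) * Δu k := by
          apply mul_le_mul_of_nonpos_right _ (le_of_lt (hΔu k hkn))
          exact div_le_div_of_nonneg_right (by linarith) h1γ.le
        have hB : γ ^ (d k + 1) * G (k + 1) ≤ γ ^ (min (d k) M + 1) * Gb (k + 1) := by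
          calc γ ^ (d k + 1) * G (k + 1) ≤ γ ^ (min (d k) M + 1) * G (k + 1) :=
                mul_le_mul_of_nonneg_right hγle1 hGnext
            _ ≤ γ ^ (min (d k) M + 1) * Gb (k + 1) :=
                mul_le_mul_of_nonneg_left hIH (by positivity)
        rw [hG k hkn, hGb k hkn]
        linarith
  intro k hk
  exact key (n + 1 - k) k hk le_rfl
end

section
/- (Lemma 2, real-time.) Let n be a natural number, let Δθ_0, …, Δθ_n and Δu_0, …, Δu_n be real numbers with Δu_k < 0 for all k, let d_0, …, d_n be real delays with d_k ≥ 0, let M ≥ 0 be a real number, and set d̄_k = min(d_k, M). Define the suffix returns G_{n+1} = 0 and, for k = n down to 0, G_k = Δθ_k + ((1 − γ^{d_k})/(−ln γ))·Δu_k + γ^(d_k + 1)·G_{k+1}; define Ḡ_k analogously with d̄_k in place of d_k. If G_k > 0 for every k ∈ {0, …, n}, then Ḡ_k ≥ G_k for every k ∈ {0, …, n + 1}; in particular the delay-bounded total return satisfies Ḡ_0 ≥ G_0. -/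
/-- Lemma 2 (real-time): if all state-based rewards are negative and all suffix
returns `G k` of the trajectory are positive, then the delay-bounded trajectory
(replacing each real delay `d k ≥ 0` by `min (d k) M`) has suffix returns
`Gb k ≥ G k`. -/
theorem delay_bounded_return_ge_realtime (γ : ℝ) (hγ0 : 0 < γ) (hγ1 : γ < 1)
    (n : ℕ) (Δθ Δu : ℕ → ℝ) (hΔu : ∀ k ≤ n, Δu k < 0)
    (d : ℕ → ℝ) (hd : ∀ k ≤ n, 0 ≤ d k) (M : ℝ) (hM : 0 ≤ M)
    (G Gb : ℕ → ℝ)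
    (hGend : G (n + 1) = 0) (hGbend : Gb (n + 1) = 0)
    (hG : ∀ k ≤ n, G k =
      Δθ k + ((1 - γ ^ d k) / (-Real.log γ)) * Δu k + γ ^ (d k + 1) * G (k + 1))
    (hGb : ∀ k ≤ n, Gb k =
      Δθ k + ((1 - γ ^ min (d k) M) / (-Real.log γ)) * Δu k
        + γ ^ (min (d k) M + 1) * Gb (k + 1))
    (hpos : ∀ k ≤ n, 0 < G k) :
    ∀ k ≤ n + 1, Gb k ≥ G k := by
  have hlog : 0 < -Real.log γ := by
    have := Real.log_neg hγ0 hγ1; linarith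
  have key : ∀ m k, k + m = n + 1 → Gb k ≥ G k := by
    intro m
    induction m with
    | zero =>
      intro k hk
      have : k = n + 1 := by omega
      rw [this, hGend, hGbend]
    | succ m ih =>
      intro k hk
      have hkn : k ≤ n := by omega
      have hih : Gb (k + 1) ≥ G (k + 1) := ih (k + 1) (by omega)
      have hGk1 : 0 ≤ G (k + 1) := by
        rcases Nat.lt_or_ge k n with h | h
        · exact (hpos (k + 1) (by omega)).le
        · have : k = n := by omega
          rw [this, hGend]
      have hmin : min (d k) M ≤ d k := min_le_left _ _
      -- rpow inequality
      have hr1 : γ ^ d k ≤ γ ^ min (d k) M :=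
        Real.rpow_le_rpow_of_exponent_ge hγ0 hγ1.le hmin
      have hr2 : γ ^ (d k + 1) ≤ γ ^ (min (d k) M + 1) :=
        Real.rpow_le_rpow_of_exponent_ge hγ0 hγ1.le (by linarith)
      have hrpos : (0:ℝ) < γ ^ (min (d k) M + 1) := Real.rpow_pos_of_pos hγ0 _
      have hA : ((1 - γ ^ d k) / (-Real.log γ)) * Δu k ≤
          ((1 - γ ^ min (d k) M) / (-Real.log γ)) * Δu k := by
        apply mul_le_mul_of_nonpos_right _ (hΔu k hkn).le
        exact div_le_div_of_nonneg_right (by linarith) hlog.le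
      have hB : γ ^ (d k + 1) * G (k + 1) ≤ γ ^ (min (d k) M + 1) * Gb (k + 1) := by
        calc γ ^ (d k + 1) * G (k + 1) ≤ γ ^ (min (d k) M + 1) * G (k + 1) :=
              mul_le_mul_of_nonneg_right hr2 hGk1
          _ ≤ γ ^ (min (d k) M + 1) * Gb (k + 1) :=
              mul_le_mul_of_nonneg_left hih hrpos.le
      rw [hG k hkn, hGb k hkn]
      linarith
  intro k hk
  exact key (n + 1 - k) k (by omega)
end

section
/- For γ ∈ (0, 1), let f(d) = 5 − (1 − γ^d)/(−ln γ) + 7·γ^(1+d). Then f(d) < 5 + 7γ for every d ∈ (0, 1), and 5 + 7γ is the least upper bound (supremum) of the image f((0, 1)); in particular the supremum is not attained on (0, 1). -/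
private lemma ce_lt (γ : ℝ) (hγ0 : 0 < γ) (hγ1 : γ < 1) :
    ∀ d ∈ Set.Ioo (0:ℝ) 1,
      5 - (1 - γ ^ d) / (-Real.log γ) + 7 * γ ^ (1 + d) < 5 + 7 * γ := by
  intro d hd
  have hlog : Real.log γ < 0 := Real.log_neg hγ0 hγ1
  have hL : 0 < -Real.log γ := by linarith
  have h1 : γ ^ d < γ ^ (0:ℝ) :=
    (Real.rpow_lt_rpow_left_iff_of_base_lt_one hγ0 hγ1).mpr hd.1
  rw [Real.rpow_zero] at h1
  have hx : 0 < (1 - γ ^ d) / (-Real.log γ) := div_pos (by linarith) hL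
  have h2 : γ ^ (1 + d) < γ ^ (1:ℝ) :=
    (Real.rpow_lt_rpow_left_iff_of_base_lt_one hγ0 hγ1).mpr (by linarith [hd.1])
  rw [Real.rpow_one] at h2
  linarith

/-- In the counterexample of Figure 5, with
`f(d) = 5 - (1 - γ^d)/(-ln γ) + 7·γ^(1+d)`, every `d ∈ (0,1)` yields a return
strictly below `5 + 7γ`, and `5 + 7γ` is the (unattained) supremum of
`f` on `(0,1)`. -/
theorem counterexample_supremum_unattained (γ : ℝ) (hγ0 : 0 < γ) (hγ1 : γ < 1) :
    (∀ d ∈ Set.Ioo (0:ℝ) 1,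
      5 - (1 - γ ^ d) / (-Real.log γ) + 7 * γ ^ (1 + d) < 5 + 7 * γ) ∧
    IsLUB ((fun d : ℝ => 5 - (1 - γ ^ d) / (-Real.log γ) + 7 * γ ^ (1 + d)) ''
      Set.Ioo 0 1) (5 + 7 * γ) ∧
    (5 + 7 * γ) ∉
      (fun d : ℝ => 5 - (1 - γ ^ d) / (-Real.log γ) + 7 * γ ^ (1 + d)) ''
        Set.Ioo 0 1 := by
  set f : ℝ → ℝ := fun d => 5 - (1 - γ ^ d) / (-Real.log γ) + 7 * γ ^ (1 + d) with hf
  have hlt := ce_lt γ hγ0 hγ1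
  have hub : (5 + 7 * γ) ∈ upperBounds (f '' Set.Ioo 0 1) := by
    rintro _ ⟨d, hd, rfl⟩
    exact (hlt d hd).le
  have hcont : ContinuousAt f 0 := by
    have h1 : ContinuousAt (fun d : ℝ => γ ^ d) 0 :=
      Real.continuousAt_const_rpow hγ0.ne'
    have h2 : ContinuousAt (fun d : ℝ => γ ^ (1 + d)) 0 :=
      (Real.continuousAt_const_rpow hγ0.ne').comp
        (continuousAt_const.add continuousAt_id)
    exact ((continuousAt_const.sub
      (((continuousAt_const.sub h1).div_const _))).add
      (continuousAt_const.mul h2))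
  have hf0 : f 0 = 5 + 7 * γ := by
    simp [hf, Real.rpow_zero, Real.rpow_one]
  have htend : Filter.Tendsto f (nhdsWithin 0 (Set.Ioo (0:ℝ) 1)) (nhds (5 + 7 * γ)) := by
    rw [← hf0]
    exact (hcont.continuousWithinAt).tendsto
  have hnebot : (nhdsWithin (0:ℝ) (Set.Ioo (0:ℝ) 1)).NeBot :=
    left_nhdsWithin_Ioo_neBot (by norm_num)
  refine ⟨hlt, ⟨hub, ?_⟩, ?_⟩
  · intro b hb
    refine le_of_tendsto htend ?_
    filter_upwards [self_mem_nhdsWithin] with d hd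
    exact hb ⟨d, hd, rfl⟩
  · rintro ⟨d, hd, hdeq⟩
    exact absurd hdeq (ne_of_lt (hlt d hd))
end

section
/- (Quantitative core of Theorem 5, the corner-point abstraction approximation.) Let γ ∈ (0, 1), let n be a natural number, let M ≥ 0, B ≥ 0 and ε ≥ 0 be real numbers, and let Δθ_0, …, Δθ_n, Δu_0, …, Δu_n be real numbers with |Δθ_i| ≤ B and |Δu_i| ≤ B for all i. Let d_0, …, d_n and d'_0, …, d'_n be delays in [0, M] with |d_i − d'_i| ≤ 2ε for all i. Define decision times t_i = Σ_{j<i} (d_j + 1) and t'_i = Σ_{j<i} (d'_j + 1), and returns G = Σ_{i=0}^{n} γ^{t_i}·(Δθ_i + ((1 − γ^{d_i})/(−ln γ))·Δu_i) and G' = Σ_{i=0}^{n} γ^{t'_i}·(Δθ_i + ((1 − γ^{d'_i})/(−ln γ))·Δu_i). Then |G − G'| ≤ 2·ε·B·(n + 1)·(1 + (−ln γ)·(1 + M)·n). -/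
/-!
Since `x ↦ γ ^ x` is `(-log γ)`-Lipschitz on `[0, ∞)` and bounded by `1` there, moving each
delay by `2ε` moves the `i`-th decision time by at most `2εn`, hence its discount by at most
`2εn·(-log γ)`, and moves the real-time accrual `(1 - γ ^ d)/(-log γ) ≤ d ≤ M` by at most `2ε`.
Each of the `n + 1` terms `γ ^ tᵢ · rᵢ` with `|rᵢ| ≤ B(1 + M)` therefore changes by at most
`2εB(1 + (-log γ)(1 + M)n)`.
-/

open Finset Real

namespace Real

theorem one_sub_rpow_le_neg_log_mul {γ : ℝ} (hγ : 0 < γ) (x : ℝ) :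
    1 - γ ^ x ≤ -log γ * x := by
  have := add_one_le_exp (log γ * x)
  rw [rpow_def_of_pos hγ]
  linarith

theorem abs_rpow_sub_rpow_le {γ x y : ℝ} (hγ0 : 0 < γ) (hγ1 : γ ≤ 1) (hx : 0 ≤ x)
    (hy : 0 ≤ y) : |γ ^ x - γ ^ y| ≤ -log γ * |x - y| := by
  wlog hxy : x ≤ y generalizing x y
  · rw [abs_sub_comm, abs_sub_comm x]
    exact this hy hx (le_of_not_ge hxy)
  have hanti : γ ^ y ≤ γ ^ x := rpow_le_rpow_of_exponent_ge hγ0 hγ1 hxy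
  have hsplit : γ ^ y = γ ^ x * γ ^ (y - x) := by rw [← rpow_add hγ0, add_sub_cancel]
  have hx_le_one : γ ^ x ≤ 1 := rpow_le_one hγ0.le hγ1 hx
  have hgap := one_sub_rpow_le_neg_log_mul hγ0 (y - x)
  have hgap_nonneg : 0 ≤ 1 - γ ^ (y - x) := by
    linarith [rpow_le_one hγ0.le hγ1 (sub_nonneg.2 hxy)]
  rw [abs_of_nonneg (sub_nonneg.2 hanti), abs_sub_comm, abs_of_nonneg (sub_nonneg.2 hxy), hsplit]
  calc γ ^ x - γ ^ x * γ ^ (y - x) = γ ^ x * (1 - γ ^ (y - x)) := by ring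
    _ ≤ 1 * (1 - γ ^ (y - x)) := by gcongr
    _ ≤ -log γ * (y - x) := by linarith

theorem neg_log_pos {γ : ℝ} (hγ0 : 0 < γ) (hγ1 : γ < 1) : 0 < -log γ :=
  neg_pos.2 (log_neg hγ0 hγ1)

end Real

theorem abs_mul_sub_mul_le (a b x y : ℝ) :
    |a * x - b * y| ≤ |a - b| * |x| + |b| * |x - y| := by
  calc |a * x - b * y| = |(a - b) * x + b * (x - y)| := by ring_nf
    _ ≤ |a - b| * |x| + |b| * |x - y| := by
        rw [← abs_mul, ← abs_mul]; exact abs_add_le _ _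

theorem Finset.abs_sum_range_sub_sum_le {f g : ℕ → ℝ} {m : ℕ} {C : ℝ}
    (h : ∀ i < m, |f i - g i| ≤ C) :
    |∑ i ∈ range m, f i - ∑ i ∈ range m, g i| ≤ m * C := by
  calc |∑ i ∈ range m, f i - ∑ i ∈ range m, g i| = |∑ i ∈ range m, (f i - g i)| := by
        rw [sum_sub_distrib]
    _ ≤ ∑ i ∈ range m, |f i - g i| := abs_sum_le_sum_abs _ _
    _ ≤ ∑ _i ∈ range m, C := sum_le_sum fun i hi => h i (mem_range.1 hi)
    _ = m * C := by rw [sum_const, card_range, nsmul_eq_mul]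

namespace RealTime

/-- `∫₀^d γ ^ s ds`, the state-based reward accrued while waiting `d` time units. -/
noncomputable def accrual (γ d : ℝ) : ℝ := (1 - γ ^ d) / -log γ

def decisionTime (d : ℕ → ℝ) (i : ℕ) : ℝ := ∑ j ∈ range i, (d j + 1)

noncomputable def stepReward (γ d θ u : ℝ) : ℝ := θ + accrual γ d * u

variable {γ : ℝ}


theorem accrual_nonneg (hγ0 : 0 < γ) (hγ1 : γ < 1) {d : ℝ} (hd : 0 ≤ d) : 0 ≤ accrual γ d :=
  div_nonneg (sub_nonneg.2 (rpow_le_one hγ0.le hγ1.le hd)) (neg_log_pos hγ0 hγ1).le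

theorem accrual_le (hγ0 : 0 < γ) (hγ1 : γ < 1) (d : ℝ) : accrual γ d ≤ d :=
  (div_le_iff₀' (neg_log_pos hγ0 hγ1)).2 (one_sub_rpow_le_neg_log_mul hγ0 d)

theorem abs_accrual_sub_accrual_le (hγ0 : 0 < γ) (hγ1 : γ < 1) {x y : ℝ} (hx : 0 ≤ x)
    (hy : 0 ≤ y) : |accrual γ x - accrual γ y| ≤ |x - y| := by
  have hL := neg_log_pos hγ0 hγ1
  have hdiff : accrual γ x - accrual γ y = (γ ^ y - γ ^ x) / -log γ := by
    unfold accrual; ring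
  rw [hdiff, abs_div, abs_of_pos hL, div_le_iff₀' hL, abs_sub_comm x]
  exact abs_rpow_sub_rpow_le hγ0 hγ1.le hy hx

theorem decisionTime_nonneg {d : ℕ → ℝ} {i : ℕ} (hd : ∀ j < i, 0 ≤ d j) :
    0 ≤ decisionTime d i :=
  sum_nonneg fun j hj => by linarith [hd j (mem_range.1 hj)]

theorem abs_decisionTime_sub_le {d d' : ℕ → ℝ} {i : ℕ} {δ : ℝ}
    (h : ∀ j < i, |d j - d' j| ≤ δ) : |decisionTime d i - decisionTime d' i| ≤ i * δ := by
  calc |decisionTime d i - decisionTime d' i| = |∑ j ∈ range i, (d j - d' j)| := by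
        simp only [decisionTime, ← sum_sub_distrib, add_sub_add_right_eq_sub]
    _ ≤ ∑ j ∈ range i, |d j - d' j| := abs_sum_le_sum_abs _ _
    _ ≤ ∑ _j ∈ range i, δ := sum_le_sum fun j hj => h j (mem_range.1 hj)
    _ = i * δ := by rw [sum_const, card_range, nsmul_eq_mul]

theorem abs_stepReward_le (hγ0 : 0 < γ) (hγ1 : γ < 1) {d θ u B M : ℝ} (hd : 0 ≤ d)
    (hdM : d ≤ M) (hθ : |θ| ≤ B) (hu : |u| ≤ B) : |stepReward γ d θ u| ≤ B * (1 + M) := by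
  have hacc := accrual_nonneg hγ0 hγ1 hd
  calc |stepReward γ d θ u| ≤ |θ| + accrual γ d * |u| := by
        rw [stepReward, ← abs_of_nonneg hacc, ← abs_mul, abs_of_nonneg hacc]
        exact abs_add_le _ _
    _ ≤ B + M * B := by
        have haccM := (accrual_le hγ0 hγ1 d).trans hdM
        exact add_le_add hθ (mul_le_mul haccM hu (abs_nonneg _) (hacc.trans haccM))
    _ = B * (1 + M) := by ring

theorem abs_stepReward_sub_le (hγ0 : 0 < γ) (hγ1 : γ < 1) {x y θ u B δ : ℝ} (hx : 0 ≤ x)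
    (hy : 0 ≤ y) (hxy : |x - y| ≤ δ) (hu : |u| ≤ B) :
    |stepReward γ x θ u - stepReward γ y θ u| ≤ δ * B := by
  have hacc := abs_accrual_sub_accrual_le hγ0 hγ1 hx hy
  calc |stepReward γ x θ u - stepReward γ y θ u| = |accrual γ x - accrual γ y| * |u| := by
        rw [stepReward, stepReward, ← abs_mul]; ring_nf
    _ ≤ δ * B := mul_le_mul (hacc.trans hxy) hu (abs_nonneg _) ((abs_nonneg _).trans hxy)

end RealTime

open RealTime

open Finset in
theorem corner_abstraction_return_close_general (γ : ℝ) (hγ0 : 0 < γ) (hγ1 : γ < 1)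
    (n : ℕ) (M B ε : ℝ)
    (Δθ Δu : ℕ → ℝ) (hΔθ : ∀ i ≤ n, |Δθ i| ≤ B) (hΔu : ∀ i ≤ n, |Δu i| ≤ B)
    (d d' : ℕ → ℝ)
    (hd : ∀ i ≤ n, d i ∈ Set.Icc (0:ℝ) M) (hd' : ∀ i ≤ n, d' i ∈ Set.Icc (0:ℝ) M)
    (hdd' : ∀ i ≤ n, |d i - d' i| ≤ 2 * ε) :
    |(∑ i ∈ range (n + 1), γ ^ (∑ j ∈ range i, (d j + 1)) *
        (Δθ i + ((1 - γ ^ d i) / (-Real.log γ)) * Δu i))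
      - (∑ i ∈ range (n + 1), γ ^ (∑ j ∈ range i, (d' j + 1)) *
        (Δθ i + ((1 - γ ^ d' i) / (-Real.log γ)) * Δu i))|
    ≤ 2 * ε * B * (n + 1) * (1 + (-Real.log γ) * (1 + M) * n) := by
  have hε : 0 ≤ 2 * ε := (abs_nonneg _).trans (hdd' 0 n.zero_le)
  have hterm : ∀ i < n + 1,
      |γ ^ decisionTime d i * stepReward γ (d i) (Δθ i) (Δu i)
        - γ ^ decisionTime d' i * stepReward γ (d' i) (Δθ i) (Δu i)|
        ≤ 2 * ε * B * (1 + (-log γ) * (1 + M) * n) := by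
    intro i hi
    have hin : i ≤ n := Nat.lt_succ_iff.1 hi
    have ht : 0 ≤ decisionTime d i := decisionTime_nonneg fun j hj => (hd j (by omega)).1
    have ht' : 0 ≤ decisionTime d' i := decisionTime_nonneg fun j hj => (hd' j (by omega)).1
    have htt' : |decisionTime d i - decisionTime d' i| ≤ n * (2 * ε) :=
      (abs_decisionTime_sub_le fun j hj => hdd' j (by omega)).trans (by gcongr)
    have hdisc : |γ ^ decisionTime d i - γ ^ decisionTime d' i| ≤ -log γ * (n * (2 * ε)) :=
      (abs_rpow_sub_rpow_le hγ0 hγ1.le ht ht').trans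
        (mul_le_mul_of_nonneg_left htt' (neg_log_pos hγ0 hγ1).le)
    have hdisc_le_one : |γ ^ decisionTime d' i| ≤ 1 := by
      rw [abs_of_pos (rpow_pos_of_pos hγ0 _)]
      exact rpow_le_one hγ0.le hγ1.le ht'
    have hstep := abs_stepReward_le hγ0 hγ1 (hd i hin).1 (hd i hin).2 (hΔθ i hin) (hΔu i hin)
    have hshift := abs_stepReward_sub_le (θ := Δθ i) hγ0 hγ1 (hd i hin).1 (hd' i hin).1
      (hdd' i hin) (hΔu i hin)
    calc _ ≤ _ := abs_mul_sub_mul_le _ _ _ _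
      _ ≤ -log γ * (n * (2 * ε)) * (B * (1 + M)) + 1 * (2 * ε * B) :=
          add_le_add (mul_le_mul hdisc hstep (abs_nonneg _) ((abs_nonneg _).trans hdisc))
            (mul_le_mul hdisc_le_one hshift (abs_nonneg _) zero_le_one)
      _ = _ := by ring
  calc _ ≤ ((n + 1 : ℕ) : ℝ) * (2 * ε * B * (1 + (-log γ) * (1 + M) * n)) :=
        abs_sum_range_sub_sum_le hterm
    _ = _ := by push_cast; ring

open Finset in
/-- Quantitative core of Theorem 5 (corner-point abstraction): shifting each
delay by at most `2ε` changes the discounted return of a bounded-horizon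
trajectory by at most `2·ε·B·(n+1)·(1 + (-ln γ)·(1+M)·n)`. -/
theorem corner_abstraction_return_close (γ : ℝ) (hγ0 : 0 < γ) (hγ1 : γ < 1)
    (n : ℕ) (M B ε : ℝ) (hM : 0 ≤ M) (hB : 0 ≤ B) (hε : 0 ≤ ε)
    (Δθ Δu : ℕ → ℝ) (hΔθ : ∀ i ≤ n, |Δθ i| ≤ B) (hΔu : ∀ i ≤ n, |Δu i| ≤ B)
    (d d' : ℕ → ℝ)
    (hd : ∀ i ≤ n, d i ∈ Set.Icc (0:ℝ) M) (hd' : ∀ i ≤ n, d' i ∈ Set.Icc (0:ℝ) M)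
    (hdd' : ∀ i ≤ n, |d i - d' i| ≤ 2 * ε) :
    |(∑ i ∈ range (n + 1), γ ^ (∑ j ∈ range i, (d j + 1)) *
        (Δθ i + ((1 - γ ^ d i) / (-Real.log γ)) * Δu i))
      - (∑ i ∈ range (n + 1), γ ^ (∑ j ∈ range i, (d' j + 1)) *
        (Δθ i + ((1 - γ ^ d' i) / (-Real.log γ)) * Δu i))|
    ≤ 2 * ε * B * (n + 1) * (1 + (-Real.log γ) * (1 + M) * n) :=
  corner_abstraction_return_close_general γ hγ0 hγ1 n M B ε Δθ Δu hΔθ hΔu d d' hd hd' hdd'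
end
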